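/- arXiv:1811.04264 — 2 statements merged into one kernel-verified Lean document; each statement's English description precedes it below -/
import Mathlib

section
/- Let 𝕜 be a commutative ring, k ≥ 1, and R = 𝕜[x_1,…,x_k]/(x_1x_2⋯x_k). Let I, J ⊆ {1,…,k} be disjoint nonempty subsets, and consider the short exact sequence 0 → R/(x_J) → R/(x_{I∪J}) → R/(x_I) → 0, where the first map is multiplication by x_I and the second is the canonical projection. Then applying Hom_R(−, R) yields a short exact sequence 0 → Hom_R(R/(x_I), R) → Hom_R(R/(x_{I∪J}), R) → Hom_R(R/(x_J), R) → 0 of R-modules; in particular the map Hom_R(R/(x_{I∪J}), R) → Hom_R(R/(x_J), R), given by precomposition with multiplication by x_I, is surjective. -/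
open MvPolynomial

/-- The ring `R = 𝕜[x₁,…,x_k]/(x₁x₂⋯x_k)`, with variables indexed by `Fin k`. -/
abbrev NodalRing (𝕜 : Type*) [CommRing 𝕜] (k : ℕ) : Type _ :=
  MvPolynomial (Fin k) 𝕜 ⧸
    Ideal.span {∏ i : Fin k, (X i : MvPolynomial (Fin k) 𝕜)}

/-- `x_I`: the image in `R` of the monomial `∏_{i ∈ I} x_i` (with `x_∅ = 1`). -/
noncomputable def xgen (𝕜 : Type*) [CommRing 𝕜] (k : ℕ) (I : Finset (Fin k)) :
    NodalRing 𝕜 k :=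
  Ideal.Quotient.mk _ (∏ i ∈ I, X i)

/-!
`Hom_R(R/(c), N)` is the `c`-torsion of `N`, and the sequence
`R/(b) --·a--> R/(ab) --> R/(a) → 0` is exact for any `a, b`, so left exactness of `Hom(-, R)`
gives everything but the surjectivity. That amounts to writing every `r` with `x_J r = 0` as
`x_I u` with `x_{I∪J} u = 0`: the annihilator of `x_J` is `(x_{Jᶜ})`, and
`x_{Jᶜ} t = x_I · x_{(I∪J)ᶜ} t` with `x_{I∪J} x_{(I∪J)ᶜ} = x_{[1,k]} = 0`.
-/

section MulQuotSpan

variable {R : Type*} [CommRing R]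

def mulQuotSpan (a b : R) {c : R} (hc : a * b = c) :
    (R ⧸ Ideal.span {b}) →ₗ[R] (R ⧸ Ideal.span {c}) :=
  Submodule.mapQ _ _ (LinearMap.mulLeft R a) <| by
    rw [Ideal.span_le, Set.singleton_subset_iff]
    exact Ideal.mem_span_singleton.2 ⟨1, by simp [hc]⟩

variable {a b c : R}

lemma mulQuotSpan_mk (hc : a * b = c) (s : R) :
    mulQuotSpan a b hc (Submodule.Quotient.mk s) = Submodule.Quotient.mk (a * s) :=
  rfl

lemma span_le_span_left_of_mul_eq (hc : a * b = c) : Ideal.span {c} ≤ Ideal.span {a} :=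
  Ideal.span_singleton_le_span_singleton.2 ⟨b, hc.symm⟩

lemma exact_mulQuotSpan_factor (hc : a * b = c) :
    Function.Exact (mulQuotSpan a b hc) (Submodule.factor (span_le_span_left_of_mul_eq hc)) := by
  intro x
  obtain ⟨r, rfl⟩ := Submodule.Quotient.mk_surjective _ x
  constructor
  · intro hr
    obtain ⟨s, rfl⟩ := Ideal.mem_span_singleton'.1 ((Submodule.Quotient.mk_eq_zero _).1 hr)
    exact ⟨Submodule.Quotient.mk s, by rw [mulQuotSpan_mk, mul_comm]⟩
  · rintro ⟨y, hy⟩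
    obtain ⟨s, rfl⟩ := Submodule.Quotient.mk_surjective _ y
    rw [← hy, mulQuotSpan_mk]
    exact (Submodule.Quotient.mk_eq_zero _).2 (Ideal.mem_span_singleton'.2 ⟨s, mul_comm s a⟩)

lemma lcomp_mulQuotSpan_surjective (hc : a * b = c) (N : Type*) [AddCommGroup N] [Module R N]
    (hlift : ∀ n : N, b • n = 0 → ∃ u : N, c • u = 0 ∧ a • u = n) :
    Function.Surjective (LinearMap.lcomp R N (mulQuotSpan a b hc)) := by
  intro ψ
  have hb0 : (Submodule.Quotient.mk b : R ⧸ Ideal.span {b}) = 0 :=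
    (Submodule.Quotient.mk_eq_zero _).2 (Ideal.subset_span rfl)
  have hb : b • ψ (Submodule.Quotient.mk 1) = 0 := by
    rw [← map_smul, ← Submodule.Quotient.mk_smul, smul_eq_mul, mul_one, hb0, map_zero]
  obtain ⟨u, hcu, hau⟩ := hlift _ hb
  refine ⟨Submodule.liftQSpanSingleton c (LinearMap.toSpanSingleton R N u) hcu, ?_⟩
  refine Submodule.linearMap_qext _ (LinearMap.ext_ring ?_)
  change (a * 1) • u = ψ (Submodule.Quotient.mk 1)
  rw [mul_one, hau]

end MulQuotSpan

section NodalRing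

variable {𝕜 : Type*} [CommRing 𝕜] {k : ℕ}

lemma xgen_mul_xgen {A B : Finset (Fin k)} (h : Disjoint A B) :
    xgen 𝕜 k A * xgen 𝕜 k B = xgen 𝕜 k (A ∪ B) := by
  simp only [xgen, ← map_mul, ← Finset.prod_union h]

lemma xgen_univ : xgen 𝕜 k Finset.univ = 0 :=
  Ideal.Quotient.eq_zero_iff_mem.2 (Ideal.subset_span rfl)

lemma exists_eq_xgen_compl_mul_of_xgen_mul_eq_zero {J : Finset (Fin k)} {s : NodalRing 𝕜 k}
    (h : xgen 𝕜 k J * s = 0) : ∃ t, s = xgen 𝕜 k Jᶜ * t := by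
  obtain ⟨p, rfl⟩ := Ideal.Quotient.mk_surjective s
  rw [xgen, ← map_mul, Ideal.Quotient.eq_zero_iff_mem, Ideal.mem_span_singleton] at h
  obtain ⟨q, hq⟩ := h
  have hp : p = (∏ i ∈ Jᶜ, X i) * q := by
    apply (isRegular_prod_X J (R := 𝕜)).left
    change (∏ i ∈ J, X i) * p = (∏ i ∈ J, X i) * ((∏ i ∈ Jᶜ, X i) * q)
    rw [hq, ← mul_assoc, ← Finset.prod_union disjoint_compl_right, Finset.union_compl]
  exact ⟨Ideal.Quotient.mk _ q, by rw [hp, xgen, ← map_mul]⟩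

lemma exists_xgen_mul_eq_of_xgen_mul_eq_zero {I J : Finset (Fin k)} (hIJ : Disjoint I J)
    {r : NodalRing 𝕜 k} (hr : xgen 𝕜 k J * r = 0) :
    ∃ u, xgen 𝕜 k (I ∪ J) * u = 0 ∧ xgen 𝕜 k I * u = r := by
  obtain ⟨t, rfl⟩ := exists_eq_xgen_compl_mul_of_xgen_mul_eq_zero hr
  have hI : Disjoint I (I ∪ J)ᶜ := disjoint_compl_right_iff.2 Finset.subset_union_left
  have hJc : I ∪ (I ∪ J)ᶜ = Jᶜ := by
    ext i
    have : i ∈ I → i ∉ J := fun hi => Finset.disjoint_left.1 hIJ hi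
    simp only [Finset.mem_union, Finset.mem_compl]
    tauto
  refine ⟨xgen 𝕜 k (I ∪ J)ᶜ * t, ?_, ?_⟩
  · rw [← mul_assoc, xgen_mul_xgen disjoint_compl_right, Finset.union_compl, xgen_univ,
      zero_mul]
  · rw [← mul_assoc, xgen_mul_xgen hI, hJc]

end NodalRing

theorem stmt_16_general (𝕜 : Type*) [CommRing 𝕜] (k : ℕ)
    (I J : Finset (Fin k)) (hdisj : Disjoint I J) :
    ∃ (f : (NodalRing 𝕜 k ⧸ Ideal.span {xgen 𝕜 k J}) →ₗ[NodalRing 𝕜 k]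
          (NodalRing 𝕜 k ⧸ Ideal.span {xgen 𝕜 k (I ∪ J)}))
      (g : (NodalRing 𝕜 k ⧸ Ideal.span {xgen 𝕜 k (I ∪ J)}) →ₗ[NodalRing 𝕜 k]
          (NodalRing 𝕜 k ⧸ Ideal.span {xgen 𝕜 k I}))
      (gstar : ((NodalRing 𝕜 k ⧸ Ideal.span {xgen 𝕜 k I}) →ₗ[NodalRing 𝕜 k]
            NodalRing 𝕜 k) →ₗ[NodalRing 𝕜 k]
          ((NodalRing 𝕜 k ⧸ Ideal.span {xgen 𝕜 k (I ∪ J)}) →ₗ[NodalRing 𝕜 k]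
            NodalRing 𝕜 k))
      (fstar : ((NodalRing 𝕜 k ⧸ Ideal.span {xgen 𝕜 k (I ∪ J)}) →ₗ[NodalRing 𝕜 k]
            NodalRing 𝕜 k) →ₗ[NodalRing 𝕜 k]
          ((NodalRing 𝕜 k ⧸ Ideal.span {xgen 𝕜 k J}) →ₗ[NodalRing 𝕜 k]
            NodalRing 𝕜 k)),
      (∀ s : NodalRing 𝕜 k,
        f (Submodule.Quotient.mk s) = Submodule.Quotient.mk (xgen 𝕜 k I * s)) ∧
      (∀ s : NodalRing 𝕜 k,
        g (Submodule.Quotient.mk s) = Submodule.Quotient.mk s) ∧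
      (∀ φ, gstar φ = φ.comp g) ∧
      (∀ φ, fstar φ = φ.comp f) ∧
      Function.Injective gstar ∧
      LinearMap.range gstar = LinearMap.ker fstar ∧
      Function.Surjective fstar := by
  have hc := xgen_mul_xgen (𝕜 := 𝕜) hdisj
  have hle := span_le_span_left_of_mul_eq hc
  refine ⟨mulQuotSpan _ _ hc, Submodule.factor hle, LinearMap.lcomp _ _ (Submodule.factor hle),
    LinearMap.lcomp _ _ (mulQuotSpan _ _ hc), mulQuotSpan_mk hc, fun _ => rfl,
    fun _ => rfl, fun _ => rfl,
    LinearMap.lcomp_injective_of_surjective _ (Submodule.factor_surjective hle), ?_,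
    lcomp_mulQuotSpan_surjective hc _ fun _ hr => exists_xgen_mul_eq_of_xgen_mul_eq_zero hdisj hr⟩
  exact (LinearMap.exact_iff.1 <| LinearMap.exact_lcomp_of_exact_of_surjective _
    (exact_mulQuotSpan_factor hc) (Submodule.factor_surjective hle)).symm

/-- **Dualizing the sequence `0 → R/(x_J) → R/(x_{I∪J}) → R/(x_I) → 0` by
`Hom_R(-, R)` again yields a short exact sequence.**
Here `f : R/(x_J) → R/(x_{I∪J})` is multiplication by `x_I` and
`g : R/(x_{I∪J}) → R/(x_I)` is the canonical projection; the claim is that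
precomposition with `g` is injective, its range is the kernel of precomposition
with `f`, and precomposition with `f` (i.e. with multiplication by `x_I`) is
surjective. -/
theorem stmt_16 (𝕜 : Type*) [CommRing 𝕜] (k : ℕ) (hk : 1 ≤ k)
    (I J : Finset (Fin k)) (hdisj : Disjoint I J)
    (hI : I.Nonempty) (hJ : J.Nonempty) :
    ∃ (f : (NodalRing 𝕜 k ⧸ Ideal.span {xgen 𝕜 k J}) →ₗ[NodalRing 𝕜 k]
          (NodalRing 𝕜 k ⧸ Ideal.span {xgen 𝕜 k (I ∪ J)}))
      (g : (NodalRing 𝕜 k ⧸ Ideal.span {xgen 𝕜 k (I ∪ J)}) →ₗ[NodalRing 𝕜 k]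
          (NodalRing 𝕜 k ⧸ Ideal.span {xgen 𝕜 k I}))
      (gstar : ((NodalRing 𝕜 k ⧸ Ideal.span {xgen 𝕜 k I}) →ₗ[NodalRing 𝕜 k]
            NodalRing 𝕜 k) →ₗ[NodalRing 𝕜 k]
          ((NodalRing 𝕜 k ⧸ Ideal.span {xgen 𝕜 k (I ∪ J)}) →ₗ[NodalRing 𝕜 k]
            NodalRing 𝕜 k))
      (fstar : ((NodalRing 𝕜 k ⧸ Ideal.span {xgen 𝕜 k (I ∪ J)}) →ₗ[NodalRing 𝕜 k]
            NodalRing 𝕜 k) →ₗ[NodalRing 𝕜 k]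
          ((NodalRing 𝕜 k ⧸ Ideal.span {xgen 𝕜 k J}) →ₗ[NodalRing 𝕜 k]
            NodalRing 𝕜 k)),
      (∀ s : NodalRing 𝕜 k,
        f (Submodule.Quotient.mk s) = Submodule.Quotient.mk (xgen 𝕜 k I * s)) ∧
      (∀ s : NodalRing 𝕜 k,
        g (Submodule.Quotient.mk s) = Submodule.Quotient.mk s) ∧
      (∀ φ, gstar φ = φ.comp g) ∧
      (∀ φ, fstar φ = φ.comp f) ∧
      Function.Injective gstar ∧
      LinearMap.range gstar = LinearMap.ker fstar ∧
      Function.Surjective fstar :=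
  stmt_16_general 𝕜 k I J hdisj
end

section
/- Let k ≥ 1. For 0 ≤ a < b ≤ k and 0 ≤ a' < b' ≤ k, set S = [0,k] ∖ {a,b} and S' = [0,k] ∖ {a',b'}, which are size-(k−1) subsets of [0,k], and associate to them the intervals I = [a+1, b] and I' = [a'+1, b']. Then S and S' are close if and only if I ∩ I' ≠ ∅. -/
/-!
A close bijection moves each element by at most one, so it sends the part of `S` above `t` into
the part of `S'` at or above `t`. If `b ≤ a'`, the part of `[0,k] ∖ {a,b}` above `b` is all of
`[b+1,k]`, while `[0,k] ∖ {a',b'}` has only `k - b - 1` elements in `[b,k]`; so disjoint intervals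
give sets that are not close. Conversely, if the intervals meet then `max a a' < min b b'`, and
cutting `[0,k]` at `m = max a a'` reduces closeness to the two one-point cases
`[0,m] ∖ {a} ~ [0,m] ∖ {a'}` and `[m+1,k] ∖ {b} ~ [m+1,k] ∖ {b'}`, each realised by shifting the
elements strictly between the two removed points by one towards the hole.
-/

/-- Two finite sets of integers are *close* if there is a bijection `g : S → S'`
with `g i ∈ {i-1, i, i+1}` for every `i ∈ S`. -/
def IsClose (S S' : Finset ℤ) : Prop :=
  ∃ g : ℤ → ℤ, Set.BijOn g ↑S ↑S' ∧ ∀ i ∈ S, g i = i - 1 ∨ g i = i ∨ g i = i + 1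

namespace IsClose

variable {S S' T T' : Finset ℤ}

theorem symm (h : IsClose S S') : IsClose S' S := by
  obtain ⟨g, hbij, hstep⟩ := h
  have hinv := hbij.invOn_invFunOn
  refine ⟨Function.invFunOn g S, hbij.symm hinv.symm, fun j hj => ?_⟩
  have hmem : Function.invFunOn g S j ∈ S := (hbij.symm hinv.symm).mapsTo hj
  have hgj : g (Function.invFunOn g S j) = j := hinv.2 hj
  have := hstep _ hmem
  omega

theorem card_filter_lt_le (h : IsClose S S') (t : ℤ) :
    (S.filter (t < ·)).card ≤ (S'.filter (t ≤ ·)).card := by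
  obtain ⟨g, hbij, hstep⟩ := h
  refine Finset.card_le_card_of_injOn g (fun i hi => ?_) (hbij.injOn.mono fun i hi => ?_)
  · rw [Finset.mem_coe, Finset.mem_filter] at hi
    have := hstep i hi.1
    exact Finset.mem_filter.2 ⟨hbij.mapsTo hi.1, by omega⟩
  · exact (Finset.mem_filter.1 hi).1

theorem union (h₁ : IsClose S S') (h₂ : IsClose T T') {m : ℤ}
    (hS : ∀ i ∈ S, i ≤ m) (hS' : ∀ i ∈ S', i ≤ m) (hT : ∀ i ∈ T, m < i) (hT' : ∀ i ∈ T', m < i) :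
    IsClose (S ∪ T) (S' ∪ T') := by
  obtain ⟨g₁, hbij₁, hstep₁⟩ := h₁
  obtain ⟨g₂, hbij₂, hstep₂⟩ := h₂
  let g : ℤ → ℤ := fun i => if i ≤ m then g₁ i else g₂ i
  have hg₁ : Set.EqOn g g₁ S := fun i hi => if_pos (hS i hi)
  have hg₂ : Set.EqOn g g₂ T := fun i hi => if_neg (not_le.2 (hT i hi))
  have hbij₁' := hbij₁.congr hg₁.symm
  have hbij₂' := hbij₂.congr hg₂.symm
  have hinj : Set.InjOn g (↑S ∪ ↑T) := by
    rintro i (hi | hi) j (hj | hj) hgij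
    · exact hbij₁'.injOn hi hj hgij
    · exact absurd hgij ((hS' _ (hbij₁'.mapsTo hi)).trans_lt (hT' _ (hbij₂'.mapsTo hj))).ne
    · exact absurd hgij ((hS' _ (hbij₁'.mapsTo hj)).trans_lt (hT' _ (hbij₂'.mapsTo hi))).ne'
    · exact hbij₂'.injOn hi hj hgij
  refine ⟨g, ?_, fun i hi => ?_⟩
  · push_cast
    exact hbij₁'.union hbij₂' hinj
  · rcases Finset.mem_union.1 hi with hi | hi
    · rw [hg₁ hi]; exact hstep₁ i hi
    · rw [hg₂ hi]; exact hstep₂ i hi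

end IsClose

theorem isClose_Icc_sdiff_singleton_of_le {p q u v : ℤ} (hpu : p ≤ u) (huv : u ≤ v) (hvq : v ≤ q) :
    IsClose (Finset.Icc p q \ {u}) (Finset.Icc p q \ {v}) := by
  let g : ℤ → ℤ := fun i => if u < i ∧ i ≤ v then i - 1 else i
  let g' : ℤ → ℤ := fun j => if u ≤ j ∧ j < v then j + 1 else j
  refine ⟨g, Set.InvOn.bijOn (f' := g') ⟨fun x hx => ?_, fun x hx => ?_⟩ (fun x hx => ?_)
    (fun x hx => ?_), fun x hx => ?_⟩ <;>
  simp only [Finset.coe_sdiff, Finset.coe_Icc, Finset.coe_singleton, Finset.mem_sdiff,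
    Finset.mem_Icc, Finset.mem_singleton, Set.mem_sdiff, Set.mem_Icc,
    Set.mem_singleton_iff] at hx ⊢ <;>
  simp only [g, g'] <;> split_ifs <;> omega

theorem isClose_Icc_sdiff_singleton {p q u v : ℤ} (hu : u ∈ Finset.Icc p q)
    (hv : v ∈ Finset.Icc p q) : IsClose (Finset.Icc p q \ {u}) (Finset.Icc p q \ {v}) := by
  rw [Finset.mem_Icc] at hu hv
  rcases le_total u v with huv | hvu
  · exact isClose_Icc_sdiff_singleton_of_le hu.1 huv hv.2
  · exact (isClose_Icc_sdiff_singleton_of_le hv.1 hvu hu.2).symm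

theorem Icc_sdiff_pair_eq_union {k a b m : ℤ} (ha : 0 ≤ a) (ham : a ≤ m) (hmb : m < b)
    (hbk : b ≤ k) :
    Finset.Icc 0 k \ {a, b} = (Finset.Icc 0 m \ {a}) ∪ (Finset.Icc (m + 1) k \ {b}) := by
  ext i
  simp only [Finset.mem_union, Finset.mem_sdiff, Finset.mem_Icc, Finset.mem_insert,
    Finset.mem_singleton]
  omega

theorem isClose_Icc_sdiff_pair {k a b a' b' m : ℤ} (ha : 0 ≤ a) (ha' : 0 ≤ a') (ham : a ≤ m)
    (ha'm : a' ≤ m) (hmb : m < b) (hmb' : m < b') (hbk : b ≤ k) (hbk' : b' ≤ k) :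
    IsClose (Finset.Icc 0 k \ {a, b}) (Finset.Icc 0 k \ {a', b'}) := by
  rw [Icc_sdiff_pair_eq_union ha ham hmb hbk, Icc_sdiff_pair_eq_union ha' ha'm hmb' hbk']
  refine (isClose_Icc_sdiff_singleton ?_ ?_).union (isClose_Icc_sdiff_singleton ?_ ?_)
    (m := m) ?_ ?_ ?_ ?_
  all_goals first
    | rw [Finset.mem_Icc]; omega
    | intro i hi; rw [Finset.mem_sdiff, Finset.mem_Icc] at hi; omega

theorem not_isClose_Icc_sdiff_pair_of_le {k a b a' b' : ℤ} (ha : 0 ≤ a) (hab : a < b)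
    (hba' : b ≤ a') (hab' : a' < b') (hbk' : b' ≤ k) :
    ¬ IsClose (Finset.Icc 0 k \ {a, b}) (Finset.Icc 0 k \ {a', b'}) := by
  intro h
  have hcount := h.card_filter_lt_le b
  have hlow : (Finset.Icc 0 k \ {a, b}).filter (b < ·) = Finset.Icc (b + 1) k := by
    ext i
    simp only [Finset.mem_filter, Finset.mem_sdiff, Finset.mem_Icc, Finset.mem_insert,
      Finset.mem_singleton]
    omega
  have hhigh : (Finset.Icc 0 k \ {a', b'}).filter (b ≤ ·) = Finset.Icc b k \ {a', b'} := by
    ext i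
    simp only [Finset.mem_filter, Finset.mem_sdiff, Finset.mem_Icc, Finset.mem_insert,
      Finset.mem_singleton]
    omega
  have hpair : ({a', b'} : Finset ℤ) ⊆ Finset.Icc b k := by
    intro i hi
    simp only [Finset.mem_insert, Finset.mem_singleton] at hi
    rw [Finset.mem_Icc]
    omega
  rw [hlow, hhigh, Finset.card_sdiff_of_subset hpair, Finset.card_pair hab'.ne, Int.card_Icc,
    Int.card_Icc] at hcount
  omega

theorem stmt_17_general (k a b a' b' : ℤ)
    (ha : 0 ≤ a) (hab : a < b) (hbk : b ≤ k)
    (ha' : 0 ≤ a') (hab' : a' < b') (hbk' : b' ≤ k) :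
    IsClose (Finset.Icc 0 k \ {a, b}) (Finset.Icc 0 k \ {a', b'}) ↔
      (Finset.Icc (a + 1) b ∩ Finset.Icc (a' + 1) b').Nonempty := by
  rw [← Finset.coe_nonempty, Finset.coe_inter, Finset.coe_Icc, Finset.coe_Icc, Set.Icc_inter_Icc,
    Set.nonempty_Icc]
  constructor
  · intro h
    by_contra hdisj
    rcases (by omega : b ≤ a' ∨ b' ≤ a) with hba' | hb'a
    · exact not_isClose_Icc_sdiff_pair_of_le ha hab hba' hab' hbk' h
    · exact not_isClose_Icc_sdiff_pair_of_le ha' hab' hb'a hab hbk h.symm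
  · intro hmeet
    exact isClose_Icc_sdiff_pair ha ha' (le_max_left a a') (le_max_right a a') (by omega)
      (by omega) hbk hbk'

/-- **Closeness of complements of pairs corresponds to intersecting intervals.**
For `0 ≤ a < b ≤ k` and `0 ≤ a' < b' ≤ k`, the size-`(k-1)` subsets
`S = [0,k] ∖ {a,b}` and `S' = [0,k] ∖ {a',b'}` of `[0,k]` are close if and only
if the associated intervals `I = [a+1,b]` and `I' = [a'+1,b']` intersect. -/
theorem stmt_17 (k a b a' b' : ℤ) (hk : 1 ≤ k)
    (ha : 0 ≤ a) (hab : a < b) (hbk : b ≤ k)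
    (ha' : 0 ≤ a') (hab' : a' < b') (hbk' : b' ≤ k) :
    IsClose (Finset.Icc 0 k \ {a, b}) (Finset.Icc 0 k \ {a', b'}) ↔
      (Finset.Icc (a + 1) b ∩ Finset.Icc (a' + 1) b').Nonempty :=
  stmt_17_general k a b a' b' ha hab hbk ha' hab' hbk'
end
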